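/- arXiv:0911.5579 — 2 statements merged into one kernel-verified Lean document; each statement's English description precedes it below -/
import Mathlib

section
/- Define K₁ : (0,∞) → ℝ by K₁(y) := ∫_0^∞ e^{−y·cosh u}·cosh u du. Fix parameters μ, θ, b ∈ ℝ and δ > 0 with θ² + μ² > 0, fix τ > 0, and let f(z) := (1/π)·sqrt((θ²+μ²)/(((z−bτ)/(δτ))²+1))·exp(μδτ + θ(z−bτ))·K₁(δτ·sqrt((θ²+μ²)·(1+((z−bτ)/(δτ))²))). Then there exist constants c₊ > 0 and c₋ > 0 such that f(z)·z^{3/2}·exp(−θz + sqrt(θ²+μ²)·z) → c₊ as z → +∞, and f(z)·|z|^{3/2}·exp(−θz + sqrt(θ²+μ²)·|z|) → c₋ as z → −∞. -/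
/-!
Substituting `t = y (cosh u - 1)` gives
`e^y √y K₁(y) = ∫₀^∞ e^{-t} (1 + t/y) / √(t (t/y + 2)) dt`, which tends to
`∫₀^∞ e^{-t} / √(2t) dt = Γ(1/2)/√2 = √(π/2)` by dominated convergence, so
`K₁(y) ~ √(π/(2y)) e^{-y}`. In `f(z)` the Bessel function is evaluated at `α R(z)`, where
`α = √(θ² + μ²)` and `R(z) = √((z - bτ)² + (δτ)²)`; since `R(z) - z → -bτ` and `R(z)/z → 1`,
the factor `e^{-α R(z)}` is `e^{-α z}` up to a positive constant, and the prefactor `1/R(z)`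
together with the `1/√(α R(z))` from `K₁` gives `z^{-3/2}`. The tail at `-∞` is the tail at `+∞`
of the density with `θ` and `b` negated.
-/

open Filter Topology Real MeasureTheory

/-- The modified Bessel function of the third kind of order 1,
`K₁(y) = ∫_0^∞ e^{-y cosh u} cosh u du`. -/
noncomputable def besselK1 (y : ℝ) : ℝ :=
  ∫ u in Set.Ioi (0 : ℝ), Real.exp (-y * Real.cosh u) * Real.cosh u

open Set

lemma mul_cosh_sub_self_image_Ioi {y : ℝ} (hy : 0 < y) :
    (fun u => y * cosh u - y) '' Ioi 0 = Ioi 0 := by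
  ext t
  constructor
  · rintro ⟨u, hu, rfl⟩
    have := one_lt_cosh.2 (ne_of_gt hu)
    simp only [mem_Ioi]
    nlinarith
  · intro (ht : 0 < t)
    have h1 : 1 < 1 + t / y := by simp [div_pos ht hy]
    refine ⟨arcosh (1 + t / y), arcosh_pos h1, ?_⟩
    simp only [cosh_arcosh h1.le]
    field_simp
    ring

lemma exp_mul_sqrt_mul_besselK1 {y : ℝ} (hy : 0 < y) :
    exp y * √y * besselK1 y =
      ∫ t in Ioi 0, exp (-t) * (1 + t / y) / √(t * (t / y + 2)) := by
  have hderiv : ∀ u ∈ Ioi (0 : ℝ),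
      HasDerivWithinAt (fun u => y * cosh u - y) (y * sinh u) (Ioi 0) u := fun u _ =>
    (((hasDerivAt_cosh u).const_mul y).sub_const y).hasDerivWithinAt
  have hinj : InjOn (fun u => y * cosh u - y) (Ioi 0) := fun u hu v hv huv =>
    cosh_injOn (Ioi_subset_Ici_self hu) (Ioi_subset_Ici_self hv)
      (mul_left_cancel₀ hy.ne' (sub_left_inj.1 huv))
  rw [← mul_cosh_sub_self_image_Ioi hy,
    integral_image_eq_integral_abs_deriv_smul measurableSet_Ioi hderiv hinj, besselK1,
    ← integral_const_mul]
  refine setIntegral_congr_fun measurableSet_Ioi fun u (hu : 0 < u) => ?_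
  have hsinh : 0 < sinh u := sinh_pos_iff.2 hu
  have hsqrt : √((y * cosh u - y) * ((y * cosh u - y) / y + 2)) = √y * sinh u := by
    rw [← sqrt_sq hsinh.le, ← sqrt_mul hy.le]
    congr 1
    field_simp
    linear_combination cosh_sq u
  simp only [smul_eq_mul, hsqrt, abs_of_pos (mul_pos hy hsinh)]
  have hsy : 0 < √y := sqrt_pos.2 hy
  rw [show -(y * cosh u - y) = y + -y * cosh u by ring, exp_add]
  field_simp
  rw [sq_sqrt hy.le]
  ring

lemma rpow_one_half_sub_one {t : ℝ} (ht : 0 ≤ t) : t ^ ((1 : ℝ) / 2 - 1) = (√t)⁻¹ := by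
  rw [show (1 : ℝ) / 2 - 1 = -(1 / 2) by norm_num, rpow_neg ht, sqrt_eq_rpow]

lemma integral_exp_neg_div_sqrt_mul_two :
    ∫ t in Ioi 0, exp (-t) / √(t * 2) = √(π / 2) := by
  rw [sqrt_div pi_pos.le, ← Gamma_one_half_eq, Gamma_eq_integral one_half_pos, div_eq_mul_inv,
    ← integral_mul_const]
  refine setIntegral_congr_fun measurableSet_Ioi fun t (ht : 0 < t) => ?_
  rw [rpow_one_half_sub_one ht.le, sqrt_mul ht.le]
  field_simp

lemma integrableOn_exp_neg_mul_one_add_div_sqrt_mul_two :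
    IntegrableOn (fun t => exp (-t) * (1 + t) / √(t * 2)) (Ioi 0) := by
  have hΓ := ((GammaIntegral_convergent one_half_pos).add
    (GammaIntegral_convergent (by norm_num : (0 : ℝ) < 3 / 2))).div_const (√2)
  refine IntegrableOn.congr_fun hΓ (fun t (ht : 0 < t) => ?_) measurableSet_Ioi
  have hst : 0 < √t := sqrt_pos.2 ht
  rw [Pi.add_apply, rpow_one_half_sub_one ht.le,
    show (3 : ℝ) / 2 - 1 = 1 / 2 by norm_num, ← sqrt_eq_rpow, sqrt_mul ht.le]
  field_simp
  rw [sq_sqrt ht.le]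

lemma tendsto_integral_exp_neg_mul_one_add_div_sqrt :
    Tendsto (fun y => ∫ t in Ioi 0, exp (-t) * (1 + t / y) / √(t * (t / y + 2))) atTop
      (𝓝 (∫ t in Ioi 0, exp (-t) / √(t * 2))) := by
  refine tendsto_integral_filter_of_dominated_convergence _
    (Eventually.of_forall fun y => (by fun_prop : Measurable _).aestronglyMeasurable) ?_
    integrableOn_exp_neg_mul_one_add_div_sqrt_mul_two ?_
  · filter_upwards [eventually_ge_atTop 1] with y hy
    filter_upwards [ae_restrict_mem measurableSet_Ioi] with t (ht : 0 < t)
    have hty : t / y ≤ t := div_le_self ht.le hy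
    rw [norm_of_nonneg (by positivity)]
    gcongr
    exact le_add_of_nonneg_left (by positivity)
  · filter_upwards [ae_restrict_mem measurableSet_Ioi] with t (ht : 0 < t)
    have h : Tendsto (fun y => t / y) atTop (𝓝 0) := tendsto_const_nhds.div_atTop tendsto_id
    have hg : ContinuousAt (fun s => exp (-t) * (1 + s) / √(t * (s + 2))) 0 :=
      ContinuousAt.div (by fun_prop) (by fun_prop) (sqrt_pos.2 (by positivity)).ne'
    simpa [Function.comp_def] using hg.tendsto.comp h

theorem tendsto_exp_mul_sqrt_mul_besselK1 :
    Tendsto (fun y => exp y * √y * besselK1 y) atTop (𝓝 √(π / 2)) := by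
  rw [← integral_exp_neg_div_sqrt_mul_two]
  refine tendsto_integral_exp_neg_mul_one_add_div_sqrt.congr' ?_
  filter_upwards [eventually_gt_atTop 0] with y hy
  exact (exp_mul_sqrt_mul_besselK1 hy).symm

/-- `√(x² + d²) - x = d² / (√(x² + d²) + x)`. -/
lemma tendsto_sqrt_sq_add_sq_sub_self (d : ℝ) :
    Tendsto (fun x => √(x ^ 2 + d ^ 2) - x) atTop (𝓝 0) := by
  have hle : ∀ x, x ≤ √(x ^ 2 + d ^ 2) := fun x =>
    (le_abs_self x).trans ((sqrt_sq_eq_abs x).symm.le.trans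
      (sqrt_le_sqrt (le_add_of_nonneg_right (sq_nonneg d))))
  have hden : Tendsto (fun x => √(x ^ 2 + d ^ 2) + x) atTop atTop :=
    tendsto_atTop_mono (fun x => by simp only [id]; linarith [hle x])
      (tendsto_id.const_mul_atTop two_pos)
  refine ((tendsto_const_nhds (x := d ^ 2)).div_atTop hden).congr' ?_
  filter_upwards [eventually_gt_atTop 0] with x hx
  have hpos : 0 < √(x ^ 2 + d ^ 2) + x := by linarith [hle x]
  rw [div_eq_iff hpos.ne']
  linear_combination -sq_sqrt (by positivity : 0 ≤ x ^ 2 + d ^ 2)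

lemma tendsto_besselK1_mul_rpow_div_mul_exp {α : ℝ} (hα : 0 < α) (c d : ℝ) :
    Tendsto (fun w => besselK1 (α * √((w - c) ^ 2 + d ^ 2)) * w ^ ((3 : ℝ) / 2) /
        √((w - c) ^ 2 + d ^ 2) * exp (α * w))
      atTop (𝓝 (√(π / 2) / √α * exp (α * c))) := by
  set R := fun w => √((w - c) ^ 2 + d ^ 2)
  have hRsub : Tendsto (fun w => R w - w) atTop (𝓝 (-c)) := by
    have hshift : Tendsto (fun w => w - c) atTop atTop := by
      simpa only [sub_eq_add_neg, id] using tendsto_atTop_add_const_right atTop (-c) tendsto_id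
    have := ((tendsto_sqrt_sq_add_sq_sub_self d).comp hshift).sub_const c
    rw [zero_sub] at this
    exact this.congr fun w => by simp only [Function.comp_apply, R]; ring
  have hR : Tendsto R atTop atTop := by
    simpa using tendsto_id.atTop_add hRsub
  have hratio : Tendsto (fun w => w / R w) atTop (𝓝 1) := by
    have := tendsto_const_nhds (x := (1 : ℝ)).sub (hRsub.div_atTop hR)
    rw [sub_zero] at this
    refine this.congr' ?_
    filter_upwards [hR.eventually_gt_atTop 0] with w hw
    field_simp
    ring
  have hlim := (tendsto_exp_mul_sqrt_mul_besselK1.comp (hR.const_mul_atTop hα)).mul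
    (((hratio.rpow_const (p := 3 / 2) (Or.inl one_ne_zero)).div_const √α).mul
      ((continuous_exp.tendsto _).comp (hRsub.const_mul (-α))))
  convert hlim.congr' ?_ using 2
  · rw [one_rpow]; ring_nf
  filter_upwards [eventually_gt_atTop 0, hR.eventually_gt_atTop 0] with w hw hRw
  have hsR : 0 < √(R w) := sqrt_pos.2 hRw
  simp only [Function.comp_apply]
  rw [div_rpow hw.le hRw.le, sqrt_mul hα.le, show -α * (R w - w) = α * w - α * R w by ring,
    exp_sub,
    show R w ^ ((3 : ℝ) / 2) = R w * √(R w) by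
      rw [sqrt_eq_rpow, ← rpow_one_add' hRw.le (by norm_num)]; norm_num]
  simp only [R] at hRw hsR ⊢
  field_simp

noncomputable def nigDensity (μ θ b δ τ z : ℝ) : ℝ :=
  (1 / π) * √((θ ^ 2 + μ ^ 2) / (((z - b * τ) / (δ * τ)) ^ 2 + 1)) *
    exp (μ * δ * τ + θ * (z - b * τ)) *
    besselK1 (δ * τ * √((θ ^ 2 + μ ^ 2) * (1 + ((z - b * τ) / (δ * τ)) ^ 2)))

lemma sqrt_div_div_sq_add_one {d : ℝ} (hd : 0 < d) (s x : ℝ) :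
    √(s / ((x / d) ^ 2 + 1)) = d * √s / √(x ^ 2 + d ^ 2) := by
  rw [show (x / d) ^ 2 + 1 = (x ^ 2 + d ^ 2) / d ^ 2 by field_simp, div_div_eq_mul_div,
    sqrt_div' _ (by positivity), sqrt_mul' _ (sq_nonneg d), sqrt_sq hd.le, mul_comm]

lemma mul_sqrt_mul_one_add_div_sq {d : ℝ} (hd : 0 < d) (s x : ℝ) :
    d * √(s * (1 + (x / d) ^ 2)) = √s * √(x ^ 2 + d ^ 2) := by
  rw [show 1 + (x / d) ^ 2 = (x ^ 2 + d ^ 2) / d ^ 2 by field_simp; ring,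
    sqrt_mul' _ (by positivity), sqrt_div' _ (by positivity), sqrt_sq hd.le]
  field_simp

lemma nigDensity_eq {δ τ : ℝ} (hδ : 0 < δ) (hτ : 0 < τ) (μ θ b z : ℝ) :
    nigDensity μ θ b δ τ z =
      δ * τ * √(θ ^ 2 + μ ^ 2) / π * exp (μ * δ * τ + θ * (z - b * τ)) *
        besselK1 (√(θ ^ 2 + μ ^ 2) * √((z - b * τ) ^ 2 + (δ * τ) ^ 2)) /
          √((z - b * τ) ^ 2 + (δ * τ) ^ 2) := by
  rw [nigDensity, sqrt_div_div_sq_add_one (mul_pos hδ hτ),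
    mul_sqrt_mul_one_add_div_sq (mul_pos hδ hτ)]
  ring

lemma nigDensity_neg (μ θ b δ τ z : ℝ) :
    nigDensity μ (-θ) (-b) δ τ z = nigDensity μ θ b δ τ (-z) := by
  unfold nigDensity
  ring_nf

theorem exists_tendsto_nigDensity_mul_rpow_mul_exp_atTop (μ θ b : ℝ) {δ τ : ℝ}
    (hδ : 0 < δ) (hτ : 0 < τ) (hθμ : 0 < θ ^ 2 + μ ^ 2) :
    ∃ c > 0, Tendsto (fun z => nigDensity μ θ b δ τ z * z ^ ((3 : ℝ) / 2) *
      exp (-θ * z + √(θ ^ 2 + μ ^ 2) * z)) atTop (𝓝 c) := by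
  set α := √(θ ^ 2 + μ ^ 2)
  have hα : 0 < α := sqrt_pos.2 hθμ
  set K := δ * τ * α / π * exp (μ * δ * τ - θ * (b * τ))
  have hK : 0 < K := by have := pi_pos; positivity
  refine ⟨K * (√(π / 2) / √α * exp (α * (b * τ))), by positivity, ?_⟩
  refine ((tendsto_besselK1_mul_rpow_div_mul_exp hα (b * τ) (δ * τ)).const_mul K).congr
    fun z => ?_
  have hexp : exp (μ * δ * τ + θ * (z - b * τ)) * exp (-θ * z + α * z) =
      exp (μ * δ * τ - θ * (b * τ)) * exp (α * z) := by
    rw [← exp_add, ← exp_add]; ring_nf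
  rw [nigDensity_eq hδ hτ]
  linear_combination (-(δ * τ * α / π) *
    besselK1 (α * √((z - b * τ) ^ 2 + (δ * τ) ^ 2)) / √((z - b * τ) ^ 2 + (δ * τ) ^ 2) *
    z ^ ((3 : ℝ) / 2)) * hexp

/-- The NIG density `f` decays at the rate `|z|^{-3/2} exp(θz - √(θ²+μ²)|z|)` as
`z → ±∞`: there exist positive constants `c₊, c₋` with
`f(z)·z^{3/2}·exp(-θz + √(θ²+μ²) z) → c₊` as `z → +∞` and
`f(z)·|z|^{3/2}·exp(-θz + √(θ²+μ²)|z|) → c₋` as `z → -∞`. -/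
theorem nig_density_tail_rate
    (μ θ b δ : ℝ) (hδ : 0 < δ) (hθμ : 0 < θ ^ 2 + μ ^ 2)
    (τ : ℝ) (hτ : 0 < τ)
    (f : ℝ → ℝ)
    (hf : ∀ z, f z
      = (1 / π) *
          Real.sqrt ((θ ^ 2 + μ ^ 2) / (((z - b * τ) / (δ * τ)) ^ 2 + 1)) *
          Real.exp (μ * δ * τ + θ * (z - b * τ)) *
          besselK1 (δ * τ *
            Real.sqrt ((θ ^ 2 + μ ^ 2) * (1 + ((z - b * τ) / (δ * τ)) ^ 2)))) :
    (∃ cp > (0 : ℝ),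
      Tendsto
        (fun z : ℝ => f z * z ^ ((3 : ℝ) / 2) *
          Real.exp (-θ * z + Real.sqrt (θ ^ 2 + μ ^ 2) * z))
        atTop (𝓝 cp))
    ∧ (∃ cm > (0 : ℝ),
      Tendsto
        (fun z : ℝ => f z * |z| ^ ((3 : ℝ) / 2) *
          Real.exp (-θ * z + Real.sqrt (θ ^ 2 + μ ^ 2) * |z|))
        atBot (𝓝 cm)) := by
  obtain rfl : f = nigDensity μ θ b δ τ := funext hf
  refine ⟨exists_tendsto_nigDensity_mul_rpow_mul_exp_atTop μ θ b hδ hτ hθμ, ?_⟩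
  obtain ⟨c, hc, h⟩ :=
    exists_tendsto_nigDensity_mul_rpow_mul_exp_atTop μ (-θ) (-b) hδ hτ (by rwa [neg_sq])
  refine ⟨c, hc, (h.comp tendsto_neg_atBot_atTop).congr' ?_⟩
  filter_upwards [eventually_lt_atBot 0] with z hz
  simp only [Function.comp_apply, nigDensity_neg, neg_neg, neg_sq, abs_of_neg hz]
  ring_nf
end

section
/- Define K₁ : (0,∞) → ℝ by K₁(y) := ∫_0^∞ e^{−y·cosh u}·cosh u du. Then K₁(y)·sqrt(2y/π)·e^{y} → 1 as y → ∞; that is, K₁(y) ∼ sqrt(π/(2y))·e^{−y} as y → ∞. -/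
open Filter Topology Real MeasureTheory

/-!
Substituting `s = sinh u` and then `s = √(2/y) t` gives
`K₁(y) = √(2/y) e^{-y} ∫_0^∞ exp(-y(√(1 + 2t²/y) - 1)) dt`.
The exponent equals `2t² / (1 + √(1 + 2t²/y))`, which tends to `t²` and is at least `t - 1`
for `y ≥ 1`, so by dominated convergence the integral tends to `∫_0^∞ e^{-t²} dt = √π / 2`.
-/

open Set

lemma besselK1_eq_integral_exp_sqrt (y : ℝ) :
    besselK1 y = ∫ s in Ioi 0, exp (-(y * √(1 + s ^ 2))) := by
  have hsqrt (u : ℝ) : √(1 + sinh u ^ 2) = cosh u := by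
    rw [add_comm, ← cosh_sq, sqrt_sq (cosh_pos u).le]
  have himage : sinh '' Ioi 0 = Ioi 0 := by simpa using sinhOrderIso.image_Ioi 0
  rw [← himage, integral_image_eq_integral_abs_deriv_smul measurableSet_Ioi
    (fun u _ => (hasDerivAt_sinh u).hasDerivWithinAt) sinh_injective.injOn, besselK1]
  congr 1 with u
  rw [smul_eq_mul, hsqrt, abs_of_pos (cosh_pos u), neg_mul, mul_comm]

lemma mul_sqrt_one_add_div_sub_one {x y : ℝ} (hy : 0 < y) (hxy : 0 ≤ 1 + x / y) :
    y * (√(1 + x / y) - 1) = x / (1 + √(1 + x / y)) := by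
  have hsq : √(1 + x / y) ^ 2 = 1 + x / y := sq_sqrt hxy
  have hpos : 0 < 1 + √(1 + x / y) := by positivity
  have hysq : y * √(1 + x / y) ^ 2 = y + x := by
    rw [hsq]
    field_simp
  rw [eq_div_iff hpos.ne']
  linear_combination hysq

lemma tendsto_mul_sqrt_one_add_div_sub_one (x : ℝ) :
    Tendsto (fun y => y * (√(1 + x / y) - 1)) atTop (𝓝 (x / 2)) := by
  have hdiv : Tendsto (fun y => x / y) atTop (𝓝 0) := tendsto_const_nhds.div_atTop tendsto_id
  have hcont : ContinuousAt (fun a => x / (1 + √(1 + a))) 0 :=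
    continuousAt_const.div (by fun_prop) (by positivity)
  have hlim := hcont.tendsto.comp hdiv
  rw [add_zero, sqrt_one, one_add_one_eq_two] at hlim
  refine hlim.congr' ?_
  filter_upwards [eventually_gt_atTop 0, hdiv.eventually (eventually_gt_nhds neg_one_lt_zero)]
    with y hy hxy
  exact (mul_sqrt_one_add_div_sub_one hy (by linarith)).symm

lemma sub_one_le_mul_sqrt_one_add_div_sub_one {y t : ℝ} (hy : 1 ≤ y) (ht : 0 ≤ t) :
    t - 1 ≤ y * (√(1 + 2 * t ^ 2 / y) - 1) := by
  have hy0 : 0 < y := one_pos.trans_le hy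
  set s := √(1 + 2 * t ^ 2 / y)
  have hs : s ≤ 1 + 2 * t := by
    calc s ≤ √(1 + 2 * t ^ 2) := sqrt_le_sqrt (by gcongr; exact div_le_self (by positivity) hy)
      _ ≤ √((1 + 2 * t) ^ 2) := sqrt_le_sqrt (by nlinarith)
      _ = 1 + 2 * t := sqrt_sq (by positivity)
  rw [mul_sqrt_one_add_div_sub_one hy0 (by positivity), le_div_iff₀ (by positivity)]
  nlinarith [sqrt_nonneg (1 + 2 * t ^ 2 / y)]

lemma besselK1_eq_mul_integral {y : ℝ} (hy : 0 < y) :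
    besselK1 y = √(2 / y) * exp (-y) *
      ∫ t in Ioi 0, exp (-(y * (√(1 + 2 * t ^ 2 / y) - 1))) := by
  have hc : 0 < √(2 / y) := sqrt_pos.2 (by positivity)
  have hintegrand (t : ℝ) : exp (-(y * √(1 + (√(2 / y) * t) ^ 2))) =
      exp (-y) * exp (-(y * (√(1 + 2 * t ^ 2 / y) - 1))) := by
    rw [mul_pow, sq_sqrt (by positivity), ← exp_add]
    ring_nf
  have hscale := integral_comp_mul_left_Ioi' (fun s => exp (-(y * √(1 + s ^ 2)))) 0 hc
  simp only [hintegrand, integral_const_mul, mul_zero, smul_eq_mul] at hscale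
  rw [besselK1_eq_integral_exp_sqrt, ← hscale, mul_assoc]

lemma tendsto_integral_exp_neg_mul_sqrt_sub_one :
    Tendsto (fun y => ∫ t in Ioi 0, exp (-(y * (√(1 + 2 * t ^ 2 / y) - 1))))
      atTop (𝓝 (√π / 2)) := by
  have hgauss : ∫ t in Ioi 0, exp (-t ^ 2) = √π / 2 := by simpa using integral_gaussian_Ioi 1
  rw [← hgauss]
  refine tendsto_integral_filter_of_dominated_convergence (fun t => exp 1 * exp (-1 * t))
    (Eventually.of_forall fun y => Continuous.aestronglyMeasurable (by fun_prop)) ?_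
    ((exp_neg_integrableOn_Ioi 0 one_pos).const_mul _) (Eventually.of_forall fun t => ?_)
  · filter_upwards [eventually_ge_atTop 1] with y hy
    refine (ae_restrict_iff' measurableSet_Ioi).2 (Eventually.of_forall fun t ht => ?_)
    rw [norm_eq_abs, abs_exp, ← exp_add]
    have := sub_one_le_mul_sqrt_one_add_div_sub_one hy ht.le
    exact exp_le_exp.2 (by linarith)
  · have hlim := (continuous_exp.comp continuous_neg).continuousAt.tendsto.comp
      (tendsto_mul_sqrt_one_add_div_sub_one (2 * t ^ 2))
    simpa [Function.comp_def] using hlim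

/-- Asymptotics of the modified Bessel function of the third kind of order 1:
`K₁(y)·√(2y/π)·e^y → 1` as `y → ∞`, i.e. `K₁(y) ∼ √(π/(2y)) e^{-y}`. -/
theorem besselK1_asymptotic :
    Tendsto (fun y : ℝ => besselK1 y * Real.sqrt (2 * y / π) * Real.exp y)
      atTop (𝓝 1) := by
  have hπ : 0 < √π := sqrt_pos.2 pi_pos
  have hlim := tendsto_integral_exp_neg_mul_sqrt_sub_one.const_mul (2 / √π)
  rw [show 2 / √π * (√π / 2) = 1 by field_simp] at hlim
  refine hlim.congr' ?_
  filter_upwards [eventually_gt_atTop 0] with y hy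
  set I := ∫ t in Ioi 0, exp (-(y * (√(1 + 2 * t ^ 2 / y) - 1)))
  have hconst : √(2 / y) * √(2 * y / π) = 2 / √π := by
    rw [← sqrt_mul (by positivity), show 2 / y * (2 * y / π) = 2 ^ 2 / π by field_simp,
      sqrt_div (by positivity), sqrt_sq zero_le_two]
  have hexp : exp (-y) * exp y = 1 := by rw [← exp_add, neg_add_cancel, exp_zero]
  rw [besselK1_eq_mul_integral hy]
  linear_combination -(I * exp (-y) * exp y) * hconst - (2 / √π * I) * hexp
end
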